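/- arXiv:1007.0515 — 2 statements merged into one kernel-verified Lean document; each statement's English description precedes it below -/
import Mathlib

section
/- Path independence of routing: let cap be a credit network on a finite type V, let σ_0 be a state, and let (s_1,t_1), …, (s_T,t_T) be a sequence of ordered pairs with s_i ≠ t_i. Suppose σ_0, σ_1, …, σ_T is a sequence of states in which each σ_i is obtained from σ_{i−1} by routing a unit payment from s_i to t_i along some feasible path. Then: (i) for any partial alternative execution σ'_0 = σ_0, σ'_1, …, σ'_{j−1} (j ≤ T), in which each σ'_i is obtained from σ'_{i−1} by routing a unit payment from s_i to t_i along some feasible path, the unit transaction (s_j,t_j) is feasible in σ'_{j−1}; and (ii) for any complete alternative execution σ'_0 = σ_0, σ'_1, …, σ'_T of the same transaction sequence, score σ'_T = score σ_T, and consequently for every pair (s,t) with s ≠ t the unit transaction (s,t) is feasible in σ'_T if and only if it is feasible in σ_T. -/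
open Finset

/-- A state of a credit network with capacities `cap`: `σ u v + σ v u = cap u v`. -/
def IsState {V : Type*} (cap σ : V → V → ℕ) : Prop :=
  ∀ u v : V, σ u v + σ v u = cap u v

/-- The score vector of a state: total capacity on outgoing edges of each vertex. -/
def score {V : Type*} [Fintype V] (σ : V → V → ℕ) (v : V) : ℕ := ∑ u, σ v u

/-- `u : Fin (k+1) → V` is a feasible path for a unit payment from `s` to `t` in state `σ`. -/
def FeasiblePath {V : Type*} (σ : V → V → ℕ) (s t : V) (k : ℕ) (u : Fin (k + 1) → V) : Prop :=
  1 ≤ k ∧ Function.Injective u ∧ u 0 = s ∧ u (Fin.last k) = t ∧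
    ∀ i : Fin k, 1 ≤ σ (u i.succ) (u i.castSucc)

/-- The unit transaction `(s,t)` is feasible in `σ`. -/
def Feasible {V : Type*} (σ : V → V → ℕ) (s t : V) : Prop :=
  ∃ (k : ℕ) (u : Fin (k + 1) → V), FeasiblePath σ s t k u

/-- `σ'` is the result of routing a unit payment along the path `u` in `σ`. -/
def RouteResult {V : Type*} (σ σ' : V → V → ℕ) (k : ℕ) (u : Fin (k + 1) → V) : Prop :=
  (∀ i : Fin k,
      σ' (u i.succ) (u i.castSucc) = σ (u i.succ) (u i.castSucc) - 1 ∧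
      σ' (u i.castSucc) (u i.succ) = σ (u i.castSucc) (u i.succ) + 1) ∧
  ∀ x y : V,
    (∀ i : Fin k, ¬(x = u i.succ ∧ y = u i.castSucc) ∧ ¬(x = u i.castSucc ∧ y = u i.succ)) →
    σ' x y = σ x y

/-- `σ'` is obtained from `σ` by routing a unit payment from `s` to `t` along some feasible path. -/
def RoutesUnit {V : Type*} (σ σ' : V → V → ℕ) (s t : V) : Prop :=
  ∃ (k : ℕ) (u : Fin (k + 1) → V), FeasiblePath σ s t k u ∧ RouteResult σ σ' k u

/-! Routing a unit from `s` to `t` along a feasible path adds to `σ` a skew-symmetric flow whose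
row sums are `+1` at `s` and `-1` at `t`. So the result is again a state, and its score vector is
that of `σ` plus `𝟙_s - 𝟙_t`, whatever path is used: all executions of the same transaction
sequence share their score vectors.

For `a ≠ b`, feasibility of `(a, b)` in `σ` is reachability of `b` from `a` along residual edges
`x → y` with `σ y x ≥ 1` (a walk can be shortened to a path). Reachability depends only on the
score vector: let `S` be the set reached from `a` in `τ`, so that `τ v u = 0` for `u ∈ S`, `v ∉ S`.
The backward cut flow `∑ u ∈ S, ∑ v ∉ S, σ v u` is determined by the scores on `S` and by `cap`,
hence it vanishes for every state `σ` with the score vector of `τ`, and `S` is closed for `σ` too.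
-/

lemma sum_castSucc_sub_succ {M : Type*} [AddCommGroup M] :
    ∀ {k : ℕ} (f : Fin (k + 1) → M), ∑ i : Fin k, (f i.castSucc - f i.succ) = f 0 - f (Fin.last k)
  | 0, f => by simp
  | k + 1, f => by
    rw [Fin.sum_univ_castSucc]
    simp_rw [Fin.succ_castSucc]
    rw [sum_castSucc_sub_succ (fun i => f i.castSucc)]
    simp

section Routing

variable {V : Type*} [DecidableEq V] {k : ℕ}

def pathFlow (u : Fin (k + 1) → V) (x y : V) : ℤ :=
  ∑ i : Fin k, ((if x = u i.castSucc ∧ y = u i.succ then 1 else 0) -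
    (if x = u i.succ ∧ y = u i.castSucc then 1 else 0))

lemma pathFlow_swap (u : Fin (k + 1) → V) (x y : V) : pathFlow u y x = -pathFlow u x y := by
  simp only [pathFlow, ← sum_neg_distrib, neg_sub, and_comm]

lemma pathFlow_edge {u : Fin (k + 1) → V} (hu : Function.Injective u) (i : Fin k) :
    pathFlow u (u i.castSucc) (u i.succ) = 1 := by
  rw [pathFlow, sum_eq_single i]
  · simp [hu.eq_iff, Fin.ext_iff]
  · intro j _ hji
    simp only [ne_eq, Fin.ext_iff, hu.eq_iff, Fin.val_castSucc, Fin.val_succ,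
      Nat.add_right_cancel_iff, and_self] at hji ⊢
    omega
  · simp

lemma pathFlow_eq_zero {u : Fin (k + 1) → V} {x y : V}
    (h : ∀ i : Fin k, ¬(x = u i.succ ∧ y = u i.castSucc) ∧ ¬(x = u i.castSucc ∧ y = u i.succ)) :
    pathFlow u x y = 0 :=
  sum_eq_zero fun i _ => by simp [(h i).1, (h i).2]

lemma sum_pathFlow [Fintype V] (u : Fin (k + 1) → V) (x : V) :
    ∑ y, pathFlow u x y = (if x = u 0 then 1 else 0) - (if x = u (Fin.last k) then 1 else 0) := by
  rw [← sum_castSucc_sub_succ (fun j => if x = u j then (1 : ℤ) else 0)]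
  simp [pathFlow, sum_comm (γ := V), sum_sub_distrib, ite_and]

lemma RouteResult.cast_eq_add_pathFlow {σ σ' : V → V → ℕ} {s t : V} {u : Fin (k + 1) → V}
    (hp : FeasiblePath σ s t k u) (hr : RouteResult σ σ' k u) (x y : V) :
    (σ' x y : ℤ) = σ x y + pathFlow u x y := by
  by_cases hfwd : ∃ i : Fin k, x = u i.castSucc ∧ y = u i.succ
  · obtain ⟨i, rfl, rfl⟩ := hfwd
    rw [(hr.1 i).2, pathFlow_edge hp.2.1]
    push_cast
    ring
  by_cases hbwd : ∃ i : Fin k, x = u i.succ ∧ y = u i.castSucc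
  · obtain ⟨i, rfl, rfl⟩ := hbwd
    rw [(hr.1 i).1, pathFlow_swap, pathFlow_edge hp.2.1, Nat.cast_sub (hp.2.2.2.2 i)]
    push_cast
    ring
  have hoff : ∀ i : Fin k,
      ¬(x = u i.succ ∧ y = u i.castSucc) ∧ ¬(x = u i.castSucc ∧ y = u i.succ) :=
    fun i => ⟨fun h => hbwd ⟨i, h⟩, fun h => hfwd ⟨i, h⟩⟩
  rw [hr.2 x y hoff, pathFlow_eq_zero hoff, add_zero]

end Routing

section Execution

variable {V : Type*}

lemma RoutesUnit.feasible {σ σ' : V → V → ℕ} {s t : V} (h : RoutesUnit σ σ' s t) :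
    Feasible σ s t :=
  let ⟨k, u, hp, _⟩ := h
  ⟨k, u, hp⟩

lemma RoutesUnit.isState {cap σ σ' : V → V → ℕ} {s t : V} (h : RoutesUnit σ σ' s t)
    (hσ : IsState cap σ) : IsState cap σ' := by
  classical
  obtain ⟨k, u, hp, hr⟩ := h
  intro x y
  have hsum : (σ' x y : ℤ) + σ' y x = σ x y + σ y x := by
    rw [hr.cast_eq_add_pathFlow hp, hr.cast_eq_add_pathFlow hp, pathFlow_swap u y x]
    ring
  rw [← hσ x y]
  exact_mod_cast hsum

lemma RoutesUnit.score_eq [Fintype V] [DecidableEq V] {σ σ' : V → V → ℕ} {s t : V}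
    (h : RoutesUnit σ σ' s t) (v : V) :
    (score σ' v : ℤ) = score σ v + (if v = s then 1 else 0) - (if v = t then 1 else 0) := by
  obtain ⟨k, u, hp, hr⟩ := h
  simp only [score, Nat.cast_sum, hr.cast_eq_add_pathFlow hp, sum_add_distrib, sum_pathFlow,
    hp.2.2.1, hp.2.2.2.1]
  ring

def IsExecution (σ : ℕ → V → V → ℕ) (s t : ℕ → V) (n : ℕ) : Prop :=
  ∀ i, i < n → RoutesUnit (σ i) (σ (i + 1)) (s i) (t i)

variable {σ σ' : ℕ → V → V → ℕ} {s t : ℕ → V}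

lemma IsExecution.mono {m n : ℕ} (h : IsExecution σ s t n) (hmn : m ≤ n) :
    IsExecution σ s t m :=
  fun i hi => h i (by omega)

lemma IsExecution.isState {cap : V → V → ℕ} (h0 : IsState cap (σ 0)) :
    ∀ {n : ℕ}, IsExecution σ s t n → IsState cap (σ n)
  | 0, _ => h0
  | n + 1, h => (h n n.lt_add_one).isState ((h.mono n.le_succ).isState h0)

lemma IsExecution.score_eq [Fintype V] (h0 : σ' 0 = σ 0) :
    ∀ {n : ℕ}, IsExecution σ' s t n → IsExecution σ s t n → score (σ' n) = score (σ n)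
  | 0, _, _ => by rw [h0]
  | n + 1, h', h => by
    classical
    funext v
    have hprev := congrFun ((h'.mono n.le_succ).score_eq h0 (h.mono n.le_succ)) v
    have hstep := (h' n n.lt_add_one).score_eq v
    rw [hprev, ← (h n n.lt_add_one).score_eq v] at hstep
    exact_mod_cast hstep

end Execution

lemma List.exists_nodup_isChain_cons_of_reflTransGen {α : Type*} {r : α → α → Prop} {a b : α}
    (h : Relation.ReflTransGen r a b) :
    ∃ l : List α, IsChain r (a :: l) ∧ (a :: l).getLast (cons_ne_nil a l) = b ∧ (a :: l).Nodup := by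
  induction h using Relation.ReflTransGen.head_induction_on with
  | refl => exact ⟨[], .singleton _, rfl, nodup_singleton _⟩
  | @head a c hac _ ih =>
    obtain ⟨l, hchain, hlast, hnodup⟩ := ih
    by_cases hmem : a ∈ c :: l
    · obtain ⟨p, q, hpq⟩ := append_of_mem hmem
      refine ⟨q, hchain.suffix ⟨p, hpq.symm⟩, ?_, hnodup.sublist (hpq ▸ sublist_append_right p _)⟩
      simp_rw [hpq] at hlast
      rwa [getLast_append_of_ne_nil] at hlast
    · refine ⟨c :: l, hchain.cons_cons hac, ?_, nodup_cons.2 ⟨hmem, hnodup⟩⟩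
      rwa [getLast_cons]

section Reachability

variable {V : Type*} {σ : V → V → ℕ} {a b : V}

def Reach (σ : V → V → ℕ) : V → V → Prop :=
  Relation.ReflTransGen fun x y => 1 ≤ σ y x

lemma Feasible.ne (h : Feasible σ a b) : a ≠ b := by
  obtain ⟨k, u, hk, hu, rfl, rfl, -⟩ := h
  intro h0
  have := congrArg Fin.val (hu h0)
  simp only [Fin.val_zero, Fin.val_last] at this
  omega

lemma Feasible.reach (h : Feasible σ a b) : Reach σ a b := by
  obtain ⟨k, u, -, -, rfl, rfl, hstep⟩ := h
  suffices ∀ m : Fin (k + 1), Reach σ (u 0) (u m) from this _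
  intro m
  induction m using Fin.induction with
  | zero => exact .refl
  | succ i ih => exact ih.tail (hstep i)

lemma Reach.feasible (h : Reach σ a b) (hab : a ≠ b) : Feasible σ a b := by
  obtain ⟨l, hchain, hlast, hnodup⟩ := List.exists_nodup_isChain_cons_of_reflTransGen h
  have hl : l ≠ [] := by
    rintro rfl
    exact hab hlast
  refine ⟨l.length, (a :: l).get, List.length_pos_iff.2 hl,
    List.nodup_iff_injective_get.1 hnodup, rfl, ?_, fun i => ?_⟩
  · rw [← hlast, List.getLast_eq_getElem]
    rfl
  · exact List.isChain_iff_getElem.1 hchain i (by simp)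

end Reachability

section Cut

variable {V : Type*} {cap σ τ : V → V → ℕ}

lemma two_mul_sum_sum_of_isState (hσ : IsState cap σ) (S : Finset V) :
    2 * ∑ u ∈ S, ∑ v ∈ S, σ u v = ∑ u ∈ S, ∑ v ∈ S, cap u v := by
  obtain rfl : cap = fun u v => σ u v + σ v u := funext₂ fun u v => (hσ u v).symm
  simp_rw [sum_add_distrib]
  rw [sum_comm (f := fun u v => σ v u)]
  ring

lemma sum_score_add_sum_cut [Fintype V] [DecidableEq V] (hσ : IsState cap σ) (S : Finset V) :
    ∑ u ∈ S, score σ u + ∑ u ∈ S, ∑ v ∈ Sᶜ, σ v u =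
      ∑ u ∈ S, ∑ v ∈ S, σ u v + ∑ u ∈ S, ∑ v ∈ Sᶜ, cap u v := by
  obtain rfl : cap = fun u v => σ u v + σ v u := funext₂ fun u v => (hσ u v).symm
  simp_rw [score, ← sum_add_sum_compl S, sum_add_distrib]
  ring

lemma sum_cut_eq_of_score_eq [Fintype V] [DecidableEq V] (hσ : IsState cap σ) (hτ : IsState cap τ)
    (hscore : score σ = score τ) (S : Finset V) :
    ∑ u ∈ S, ∑ v ∈ Sᶜ, σ v u = ∑ u ∈ S, ∑ v ∈ Sᶜ, τ v u := by
  have hσS := sum_score_add_sum_cut hσ S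
  have hτS := sum_score_add_sum_cut hτ S
  have hσ2 := two_mul_sum_sum_of_isState hσ S
  have hτ2 := two_mul_sum_sum_of_isState hτ S
  rw [hscore] at hσS
  omega

lemma Reach.of_score_eq [Fintype V] (hσ : IsState cap σ) (hτ : IsState cap τ)
    (hscore : score σ = score τ) {a b : V} (h : Reach σ a b) : Reach τ a b := by
  classical
  set S := univ.filter (Reach τ a)
  have hτcut : ∑ u ∈ S, ∑ v ∈ Sᶜ, τ v u = 0 := by
    refine sum_eq_zero fun u hu => sum_eq_zero fun v hv => ?_
    simp only [S, mem_compl, mem_filter, mem_univ, true_and] at hu hv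
    by_contra hvu
    exact hv (hu.tail (Nat.one_le_iff_ne_zero.2 hvu))
  have hσcut := (sum_cut_eq_of_score_eq hσ hτ hscore S).trans hτcut
  simp only [sum_eq_zero_iff] at hσcut
  suffices b ∈ S by simpa [S] using this
  induction h with
  | refl => exact mem_filter.2 ⟨mem_univ a, .refl⟩
  | @tail c d _ hdc hc =>
    by_contra hd
    have := hσcut c hc d (mem_compl.2 hd)
    omega

lemma Feasible.of_score_eq [Fintype V] (hσ : IsState cap σ) (hτ : IsState cap τ)
    (hscore : score σ = score τ) {a b : V} (h : Feasible σ a b) : Feasible τ a b :=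
  (h.reach.of_score_eq hσ hτ hscore).feasible h.ne

end Cut

theorem stmt3_general {V : Type*} [Fintype V]
    (cap : V → V → ℕ)
    (T : ℕ) (s t : ℕ → V)
    (σ : ℕ → V → V → ℕ) (hstate : IsState cap (σ 0))
    (hroute : ∀ i, i < T → RoutesUnit (σ i) (σ (i + 1)) (s i) (t i)) :
    (∀ j, j < T → ∀ σ' : ℕ → V → V → ℕ, σ' 0 = σ 0 →
      (∀ i, i < j → RoutesUnit (σ' i) (σ' (i + 1)) (s i) (t i)) →
      Feasible (σ' j) (s j) (t j)) ∧
    (∀ σ' : ℕ → V → V → ℕ, σ' 0 = σ 0 →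
      (∀ i, i < T → RoutesUnit (σ' i) (σ' (i + 1)) (s i) (t i)) →
      score (σ' T) = score (σ T) ∧
        ∀ a b : V, a ≠ b → (Feasible (σ' T) a b ↔ Feasible (σ T) a b)) := by
  have hexec : IsExecution σ s t T := hroute
  refine ⟨fun j hj σ' h0 (hexec' : IsExecution σ' s t j) => ?_,
    fun σ' h0 (hexec' : IsExecution σ' s t T) => ?_⟩
  · have hexecj := hexec.mono hj.le
    exact (hroute j hj).feasible.of_score_eq (hexecj.isState hstate)
      (hexec'.isState (h0 ▸ hstate)) (hexec'.score_eq h0 hexecj).symm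
  · have hscore := hexec'.score_eq h0 hexec
    have hσT := hexec.isState hstate
    have hσ'T := hexec'.isState (h0 ▸ hstate)
    exact ⟨hscore, fun a b _ =>
      ⟨fun h => h.of_score_eq hσ'T hσT hscore, fun h => h.of_score_eq hσT hσ'T hscore.symm⟩⟩

/-- Path independence of routing (Theorem 1 of the paper). -/
theorem stmt3 {V : Type*} [Fintype V]
    (cap : V → V → ℕ) (hcap_symm : ∀ u v : V, cap u v = cap v u)
    (hcap_diag : ∀ v : V, cap v v = 0)
    (T : ℕ) (s t : ℕ → V) (hst : ∀ i, i < T → s i ≠ t i)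
    (σ : ℕ → V → V → ℕ) (hstate : IsState cap (σ 0))
    (hroute : ∀ i, i < T → RoutesUnit (σ i) (σ (i + 1)) (s i) (t i)) :
    (∀ j, j < T → ∀ σ' : ℕ → V → V → ℕ, σ' 0 = σ 0 →
      (∀ i, i < j → RoutesUnit (σ' i) (σ' (i + 1)) (s i) (t i)) →
      Feasible (σ' j) (s j) (t j)) ∧
    (∀ σ' : ℕ → V → V → ℕ, σ' 0 = σ 0 →
      (∀ i, i < T → RoutesUnit (σ' i) (σ' (i + 1)) (s i) (t i)) →
      score (σ' T) = score (σ T) ∧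
        ∀ a b : V, a ≠ b → (Feasible (σ' T) a b ↔ Feasible (σ T) a b)) :=
  stmt3_general cap T s t σ hstate hroute
end

section
/- Success probability in cycle networks: let m ≥ 3 and c ≥ 1 be integers, and consider the cycle credit network on V = ZMod m with cap i j = c if j = i + 1 or i = j + 1, and cap i j = 0 otherwise. Fix an integer l with 1 ≤ l ≤ m − 1, and let s = 0 and t = l in ZMod m. Then the number of distinct score vectors d such that the unit transaction (s,t) is feasible in some (equivalently, every) state with score vector d equals c^l·(c+1)^{m−l} + c^{m−l}·(c+1)^l − 2·c^m. Consequently, writing r = c/(c+1), the fraction of the (c+1)^m − c^m score vectors in which the transaction (s,t) is feasible equals (r^l + r^{m−l} − 2r^m)/(1 − r^m). -/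
/-!
A state of the cycle network is determined by the credits `a i = σ i (i + 1) ∈ [0, c]`, and its
score is `d i = a i + c - a (i - 1)`. Two credit vectors have the same score iff they differ by a
constant, so score vectors correspond to credit vectors with a zero entry.

The payment `0 → l` is feasible iff it can go clockwise (`a i < c` on the arc `[0, l)`) or
counterclockwise (`1 ≤ a i` on `[l, m)`): otherwise the arc `(i, j]` between a blocked
clockwise edge `i` and a blocked counterclockwise edge `j` is a cut. By inclusion–exclusion
there are `c^l (c+1)^(m-l) + c^(m-l) (c+1)^l - c^m` routable credit vectors, and exactly `c^m`
of them (those without a zero entry) are not normalised.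
-/


open Finset

def feasibleScores {V : Type*} [Fintype V] (cap : V → V → ℕ) (s t : V) : Set (V → ℕ) :=
  {d | ∃ σ, IsState cap σ ∧ score σ = d ∧ Feasible σ s t}

theorem Feasible.exists_step_across {V : Type*} {σ : V → V → ℕ} {s t : V}
    (h : Feasible σ s t) (S : Set V) (hs : s ∉ S) (ht : t ∈ S) :
    ∃ x ∉ S, ∃ y ∈ S, 1 ≤ σ y x := by
  by_contra! hcut
  obtain ⟨k, u, -, -, h0, hk, hstep⟩ := h
  have hout : ∀ i, u i ∉ S := fun i =>
    Fin.induction (motive := fun i => u i ∉ S) (h0 ▸ hs)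
      (fun i hi hmem => (hcut _ hi _ hmem).not_ge (hstep i)) i
  exact hout (Fin.last k) (hk ▸ ht)

section ZModPath

variable {m : ℕ}

theorem ZMod.natCast_injOn_lt : Set.InjOn (Nat.cast : ℕ → ZMod m) {n | n < m} :=
  fun a ha b hb hab => by
    simpa [ZMod.val_cast_of_lt ha, ZMod.val_cast_of_lt hb] using congrArg ZMod.val hab

theorem feasible_of_arith_path {σ : ZMod m → ZMod m → ℕ} {s d : ZMod m} (hd : IsUnit d)
    {k : ℕ} (hk : 1 ≤ k) (hkm : k < m)
    (hstep : ∀ n < k, 1 ≤ σ (s + (n + 1 : ℕ) * d) (s + n * d)) :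
    Feasible σ s (s + k * d) := by
  refine ⟨k, fun i => s + (i : ℕ) * d, hk, fun i j hij => ?_, by simp, by simp, fun i => ?_⟩
  · have := hd.mul_left_inj.1 (add_left_cancel hij)
    exact Fin.ext (ZMod.natCast_injOn_lt (by simp; omega) (by simp; omega) this)
  · simpa using hstep i i.isLt

end ZModPath

section CycleNetwork

variable {m : ℕ}

abbrev cycleCap (c : ℕ) : ZMod m → ZMod m → ℕ := fun i j =>
  if j = i + 1 ∨ i = j + 1 then c else 0

/-- States of the cycle network are parametrised by the credit `a i = σ i (i + 1)` of each edge. -/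
def cycleState (c : ℕ) (a : ZMod m → ℕ) : ZMod m → ZMod m → ℕ := fun i j =>
  if j = i + 1 then a i else if i = j + 1 then c - a j else 0

theorem ZMod.add_one_ne_sub_one (hm : 3 ≤ m) (i : ZMod m) : i + 1 ≠ i - 1 := by
  intro h
  have h2 : ((2 : ℕ) : ZMod m) = 0 := by push_cast; linear_combination h
  rw [ZMod.natCast_eq_zero_iff] at h2
  exact absurd (Nat.le_of_dvd two_pos h2) (by omega)

theorem ZMod.not_eq_add_one_and_eq_add_one (hm : 3 ≤ m) {i j : ZMod m} (hj : j = i + 1)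
    (hi : i = j + 1) : False :=
  ZMod.add_one_ne_sub_one hm i (by linear_combination -hj - hi)

@[simp]
theorem cycleState_self_add_one (c : ℕ) (a : ZMod m → ℕ) (i : ZMod m) :
    cycleState c a i (i + 1) = a i := by
  simp [cycleState]

theorem cycleState_add_one_self (hm : 3 ≤ m) (c : ℕ) (a : ZMod m → ℕ) (i : ZMod m) :
    cycleState c a (i + 1) i = c - a i := by
  rw [cycleState, if_neg fun h => ZMod.not_eq_add_one_and_eq_add_one hm h rfl, if_pos rfl]

theorem isState_cycleState (hm : 3 ≤ m) {c : ℕ} {a : ZMod m → ℕ} (ha : ∀ i, a i ≤ c) :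
    IsState (cycleCap c) (cycleState c a) := by
  intro u v
  rcases em (v = u + 1) with rfl | h1
  · have h2 : u ≠ u + 1 + 1 := ZMod.not_eq_add_one_and_eq_add_one hm rfl
    have := ha u
    simp [cycleState, cycleCap, h2]
    omega
  · rcases em (u = v + 1) with rfl | h2
    · have := ha v
      simp [cycleState, cycleCap, h1]
      omega
    · simp [cycleState, cycleCap, h1, h2]

theorem IsState.eq_cycleState {c : ℕ} {σ : ZMod m → ZMod m → ℕ}
    (hσ : IsState (cycleCap c) σ) : σ = cycleState c (fun i => σ i (i + 1)) := by
  funext u v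
  have huv := hσ u v
  rcases em (v = u + 1) with rfl | h1
  · simp [cycleState]
  · rcases em (u = v + 1) with rfl | h2
    · simp [cycleState, cycleCap, h1] at huv ⊢
      omega
    · simp [cycleState, cycleCap, h1, h2] at huv ⊢
      omega

theorem IsState.le_cycleCap {c : ℕ} {σ : ZMod m → ZMod m → ℕ}
    (hσ : IsState (cycleCap c) σ) (i : ZMod m) : σ i (i + 1) ≤ c := by
  have := hσ i (i + 1)
  simp only [cycleCap, true_or, if_true] at this
  omega

theorem score_cycleState [NeZero m] (hm : 3 ≤ m) (c : ℕ) (a : ZMod m → ℕ) (i : ZMod m) :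
    score (cycleState c a) i = a i + (c - a (i - 1)) := by
  rw [score, Fintype.sum_eq_add (i + 1) (i - 1) (ZMod.add_one_ne_sub_one hm i)]
  · rw [cycleState_self_add_one, ← cycleState_add_one_self hm c a (i - 1), sub_add_cancel]
  · rintro j ⟨hj1, hj2⟩
    simp only [cycleState]
    rw [if_neg hj1, if_neg fun h => hj2 (by linear_combination -h)]

theorem one_le_cycleState (c : ℕ) {a : ZMod m → ℕ} {x y : ZMod m}
    (h : 1 ≤ cycleState c a y x) : (x = y + 1 ∧ 1 ≤ a y) ∨ (y = x + 1 ∧ a x < c) := by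
  simp only [cycleState] at h
  split_ifs at h with h1 h2
  · exact Or.inl ⟨h1, h⟩
  · exact Or.inr ⟨h2, by omega⟩
  · omega

end CycleNetwork

section Routing

variable {m : ℕ} {c l : ℕ} {a : ZMod m → ℕ}

def ClockwiseRoutable (c l : ℕ) (a : ZMod m → ℕ) : Prop :=
  ∀ i : ZMod m, i.val < l → a i < c

def CounterclockwiseRoutable (l : ℕ) (a : ZMod m → ℕ) : Prop :=
  ∀ i : ZMod m, l ≤ i.val → 1 ≤ a i

theorem ClockwiseRoutable.feasible (hm : 3 ≤ m) (hl : 1 ≤ l) (hlm : l < m)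
    (h : ClockwiseRoutable c l a) : Feasible (cycleState c a) 0 l := by
  have := feasible_of_arith_path (σ := cycleState c a) (s := 0) isUnit_one hl hlm
    fun n hn => ?_
  · simpa using this
  · rw [zero_add, zero_add, mul_one, mul_one, Nat.cast_succ, cycleState_add_one_self hm]
    have := h n (by rwa [ZMod.val_cast_of_lt (hn.trans hlm)])
    omega

theorem CounterclockwiseRoutable.feasible (hl : 1 ≤ l) (hlm : l < m)
    (h : CounterclockwiseRoutable l a) :
    Feasible (cycleState c a) 0 l := by
  have := feasible_of_arith_path (σ := cycleState c a) (s := 0) isUnit_one.neg (k := m - l)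
    (by omega) (by omega) fun n hn => ?_
  · convert this using 1
    rw [Nat.cast_sub hlm.le, ZMod.natCast_self]
    ring
  · have e : ((m - (n + 1) : ℕ) : ZMod m) = 0 + ((n + 1 : ℕ) : ZMod m) * -1 := by
      rw [Nat.cast_sub (by omega), ZMod.natCast_self]
      ring
    have e' : ((m - (n + 1) : ℕ) : ZMod m) + 1 = 0 + (n : ZMod m) * -1 := by
      rw [e]
      push_cast
      ring
    rw [← e, ← e', cycleState_self_add_one]
    exact h _ (by rw [ZMod.val_cast_of_lt (by omega)]; omega)

/-- The cut is the arc `(i, j]`, where the edge `(i, i + 1)` is saturated clockwise and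
`(j, j + 1)` counterclockwise. -/
theorem routable_of_feasible [NeZero m] (ha : ∀ i, a i ≤ c)
    (h : Feasible (cycleState c a) 0 l) :
    ClockwiseRoutable c l a ∨ CounterclockwiseRoutable l a := by
  by_contra! hblocked
  simp only [ClockwiseRoutable, CounterclockwiseRoutable, not_forall, not_lt,
    Nat.not_le, exists_prop] at hblocked
  obtain ⟨⟨i, hil, hai⟩, ⟨j, hlj, haj⟩⟩ := hblocked
  have hjm := ZMod.val_lt j
  obtain ⟨x, hx, y, ⟨n, ⟨hin, hnj⟩, rfl⟩, hxy⟩ :=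
    h.exists_step_across (Nat.cast '' Set.Ioc i.val j.val)
      (by
        rintro ⟨n, ⟨hin, hnj⟩, hn⟩
        have := congrArg ZMod.val hn
        rw [ZMod.val_cast_of_lt (by omega), ZMod.val_zero] at this
        omega)
      ⟨l, ⟨hil, hlj⟩, rfl⟩
  rcases one_le_cycleState c hxy with ⟨rfl, hay⟩ | ⟨hyx, hax⟩
  · have hnj : n = j.val := by
      by_contra hne
      exact hx ⟨n + 1, ⟨by omega, by omega⟩, by push_cast; rfl⟩
    rw [hnj, ZMod.natCast_zmod_val] at hay
    omega
  · have hni : n - 1 = i.val := by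
      by_contra hne
      exact hx ⟨n - 1, ⟨by omega, by omega⟩, by
        rw [Nat.cast_sub (by omega), hyx]; push_cast; ring⟩
    have hxi : x = i := by
      rw [← ZMod.natCast_zmod_val i, ← hni, Nat.cast_sub (by omega), hyx]
      push_cast
      ring
    have := ha i
    rw [hxi] at hax
    omega

end Routing

section Scores

variable {m : ℕ} [NeZero m] {c l : ℕ} {a b : ZMod m → ℕ}

theorem eq_of_score_cycleState_eq (hm : 3 ≤ m) (ha : ∀ i, a i ≤ c) (hb : ∀ i, b i ≤ c)
    (ha0 : ∃ i, a i = 0) (hb0 : ∃ i, b i = 0)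
    (h : score (cycleState c a) = score (cycleState c b)) : a = b := by
  have hper : Function.Periodic (fun i => (a i : ℤ) - b i) 1 := by
    intro i
    have := congrFun h (i + 1)
    rw [score_cycleState hm, score_cycleState hm, add_sub_cancel_right] at this
    have := ha i
    have := hb i
    dsimp only
    omega
  have hconst (i : ZMod m) : (a i : ℤ) - b i = a 0 - b 0 := by
    simpa using hper.nat_mul_eq i.val
  obtain ⟨i, hi⟩ := ha0
  obtain ⟨j, hj⟩ := hb0
  funext k
  have := hconst i
  have := hconst j
  have := hconst k
  omega

theorem exists_normalized (hm : 3 ≤ m) (ha : ∀ i, a i ≤ c)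
    (hroute : ClockwiseRoutable c l a ∨ CounterclockwiseRoutable l a) :
    ∃ b : ZMod m → ℕ, (∀ i, b i ≤ c) ∧
      (ClockwiseRoutable c l b ∨ CounterclockwiseRoutable l b) ∧ (∃ i, b i = 0) ∧
      score (cycleState c b) = score (cycleState c a) := by
  obtain ⟨i₀, -, hi₀⟩ := Finset.exists_min_image univ a univ_nonempty
  refine ⟨fun i => a i - a i₀, fun i => (Nat.sub_le _ _).trans (ha i), ?_,
    ⟨i₀, Nat.sub_self _⟩, funext fun i => ?_⟩
  · rcases hroute with hcw | hccw
    · exact Or.inl fun i hi => (Nat.sub_le _ _).trans_lt (hcw i hi)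
    · rcases Nat.eq_zero_or_pos (a i₀) with h0 | h0
      · exact Or.inr fun i hi => by simpa [h0] using hccw i hi
      · refine Or.inl fun i _ => show a i - a i₀ < c from ?_
        have := ha i
        have := hi₀ i (mem_univ _)
        omega
  · rw [score_cycleState hm, score_cycleState hm]
    have := hi₀ i (mem_univ _)
    have := hi₀ (i - 1) (mem_univ _)
    have := ha (i - 1)
    omega

end Scores

section Counting

variable {m : ℕ} [NeZero m] {c l : ℕ}

theorem ZMod.card_filter_val_lt (hl : l ≤ m) :
    #(univ.filter fun i : ZMod m => i.val < l) = l := by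
  refine (card_nbij' (t := range l) ZMod.val Nat.cast (fun i hi => ?_) (fun n hn => ?_)
    (fun i _ => ?_) (fun n hn => ?_)).trans (card_range l)
  · simpa using hi
  · simp only [coe_range, Set.mem_Iio, coe_filter, mem_univ, true_and, Set.mem_ofPred_eq] at hn ⊢
    rwa [ZMod.val_cast_of_lt (by omega)]
  · exact ZMod.natCast_zmod_val i
  · simp only [coe_range, Set.mem_Iio] at hn
    exact ZMod.val_cast_of_lt (by omega)

theorem ZMod.card_piFinset_ite_val_lt {α : Type*} (hl : l ≤ m) (s t : Finset α) :
    #(Fintype.piFinset fun i : ZMod m => if i.val < l then s else t) = #s ^ l * #t ^ (m - l) := by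
  rw [Fintype.card_piFinset]
  simp_rw [apply_ite Finset.card]
  rw [prod_ite, prod_const, prod_const, ZMod.card_filter_val_lt hl]
  congr
  have := card_filter_add_card_filter_not (s := univ) fun i : ZMod m => i.val < l
  rw [ZMod.card_filter_val_lt hl, card_univ, ZMod.card] at this
  omega

def cycleCredits (m c : ℕ) [NeZero m] : Finset (ZMod m → ℕ) :=
  Fintype.piFinset fun _ => range (c + 1)

theorem mem_cycleCredits {a : ZMod m → ℕ} : a ∈ cycleCredits m c ↔ ∀ i, a i ≤ c := by
  simp [cycleCredits]

instance : DecidablePred (ClockwiseRoutable (m := m) c l) := fun a =>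
  inferInstanceAs (Decidable (∀ i : ZMod m, i.val < l → a i < c))

instance : DecidablePred (CounterclockwiseRoutable (m := m) l) := fun a =>
  inferInstanceAs (Decidable (∀ i : ZMod m, l ≤ i.val → 1 ≤ a i))

theorem filter_clockwiseRoutable_cycleCredits :
    (cycleCredits m c).filter (ClockwiseRoutable c l) =
      Fintype.piFinset fun i => if i.val < l then range c else range (c + 1) := by
  ext a
  simp only [mem_filter, mem_cycleCredits, ClockwiseRoutable, Fintype.mem_piFinset,
    ← forall_and]
  refine forall_congr' fun i => ?_
  split_ifs with hi
  · simp [hi]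
    omega
  · simp [hi]

theorem filter_counterclockwiseRoutable_cycleCredits :
    (cycleCredits m c).filter (CounterclockwiseRoutable l) =
      Fintype.piFinset fun i => if i.val < l then range (c + 1) else Icc 1 c := by
  ext a
  simp only [mem_filter, mem_cycleCredits, CounterclockwiseRoutable, Fintype.mem_piFinset,
    ← forall_and]
  refine forall_congr' fun i => ?_
  split_ifs with hi
  · simp [hi]
  · simp
    omega

theorem filter_routable_and_cycleCredits :
    (cycleCredits m c).filter
        (fun a => ClockwiseRoutable c l a ∧ CounterclockwiseRoutable l a) =
      Fintype.piFinset fun i => if i.val < l then range c else Icc 1 c := by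
  ext a
  simp only [mem_filter, mem_cycleCredits, ClockwiseRoutable, CounterclockwiseRoutable,
    Fintype.mem_piFinset, ← forall_and]
  refine forall_congr' fun i => ?_
  split_ifs with hi <;> simp [hi] <;> omega

theorem filter_pos_cycleCredits :
    (cycleCredits m c).filter (fun a => ∀ i, 1 ≤ a i) = Fintype.piFinset fun _ => Icc 1 c := by
  ext a
  simp only [mem_filter, mem_cycleCredits, Fintype.mem_piFinset, mem_Icc, ← forall_and]
  exact forall_congr' fun i => by omega

theorem card_routable_cycleCredits (hl : l ≤ m) :
    #((cycleCredits m c).filter fun a => ClockwiseRoutable c l a ∨ CounterclockwiseRoutable l a)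
      + c ^ m = c ^ l * (c + 1) ^ (m - l) + c ^ (m - l) * (c + 1) ^ l := by
  have h := card_union_add_card_inter ((cycleCredits m c).filter (ClockwiseRoutable c l))
    ((cycleCredits m c).filter (CounterclockwiseRoutable l))
  rw [← filter_or, ← filter_and, filter_clockwiseRoutable_cycleCredits,
    filter_counterclockwiseRoutable_cycleCredits, filter_routable_and_cycleCredits] at h
  simp only [ZMod.card_piFinset_ite_val_lt hl, card_range, Nat.card_Icc, Nat.add_sub_cancel,
    ← pow_add, Nat.add_sub_cancel' hl] at h
  rw [h, mul_comm (c ^ (m - l))]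

theorem card_normalized_routable (hl : l ≤ m) :
    #((cycleCredits m c).filter fun a =>
        (ClockwiseRoutable c l a ∨ CounterclockwiseRoutable l a) ∧ ∃ i, a i = 0) + 2 * c ^ m =
      c ^ l * (c + 1) ^ (m - l) + c ^ (m - l) * (c + 1) ^ l := by
  have h := card_filter_add_card_filter_not (s := (cycleCredits m c).filter
    fun a => ClockwiseRoutable c l a ∨ CounterclockwiseRoutable l a) fun a => ∀ i, 1 ≤ a i
  have hpos : (cycleCredits m c).filter (fun a =>
      (ClockwiseRoutable c l a ∨ CounterclockwiseRoutable l a) ∧ ∀ i, 1 ≤ a i) =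
      (cycleCredits m c).filter (fun a => ∀ i, 1 ≤ a i) :=
    filter_congr fun a _ => and_iff_right_of_imp fun h => Or.inr fun i _ => h i
  have hzero : (cycleCredits m c).filter (fun a =>
      (ClockwiseRoutable c l a ∨ CounterclockwiseRoutable l a) ∧ ¬∀ i, 1 ≤ a i) =
      (cycleCredits m c).filter (fun a =>
        (ClockwiseRoutable c l a ∨ CounterclockwiseRoutable l a) ∧ ∃ i, a i = 0) :=
    filter_congr fun a _ => by simp [Nat.one_le_iff_ne_zero]
  rw [filter_filter, filter_filter, hpos, hzero, filter_pos_cycleCredits,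
    Fintype.card_piFinset, prod_const, card_univ, ZMod.card, Nat.card_Icc,
    Nat.add_sub_cancel] at h
  rw [← card_routable_cycleCredits hl, ← h]
  ring

end Counting

section ScoreVectors

variable {m : ℕ} [NeZero m] {c l : ℕ}

theorem feasibleScores_cycleCap_eq_image (hm : 3 ≤ m) (hl : 1 ≤ l) (hlm : l < m) :
    feasibleScores (cycleCap c) 0 (l : ZMod m) =
      ((cycleCredits m c).filter fun a =>
        (ClockwiseRoutable c l a ∨ CounterclockwiseRoutable l a) ∧ ∃ i, a i = 0).image
        fun a => score (cycleState c a) := by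
  ext d
  simp only [feasibleScores, Set.mem_ofPred_eq, coe_image, coe_filter, Set.mem_image,
    mem_cycleCredits]
  constructor
  · rintro ⟨σ, hσ, rfl, hfeas⟩
    rw [hσ.eq_cycleState] at hfeas ⊢
    obtain ⟨b, hbc, hroute, hzero, hscore⟩ :=
      exists_normalized hm hσ.le_cycleCap (routable_of_feasible hσ.le_cycleCap hfeas)
    exact ⟨b, ⟨hbc, hroute, hzero⟩, hscore⟩
  · rintro ⟨a, ⟨hac, hroute, -⟩, rfl⟩
    exact ⟨cycleState c a, isState_cycleState hm hac, rfl,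
      hroute.elim (·.feasible hm hl hlm) (·.feasible hl hlm)⟩

theorem ncard_feasibleScores_cycleCap_add (hm : 3 ≤ m) (hl : 1 ≤ l) (hlm : l < m) :
    (feasibleScores (cycleCap c) 0 (l : ZMod m)).ncard + 2 * c ^ m =
      c ^ l * (c + 1) ^ (m - l) + c ^ (m - l) * (c + 1) ^ l := by
  rw [feasibleScores_cycleCap_eq_image hm hl hlm, Set.ncard_coe_finset, card_image_of_injOn]
  · exact card_normalized_routable hlm.le
  · intro a ha b hb hab
    obtain ⟨ha, -, ha0⟩ := mem_filter.1 ha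
    obtain ⟨hb, -, hb0⟩ := mem_filter.1 hb
    exact eq_of_score_cycleState_eq hm (mem_cycleCredits.1 ha) (mem_cycleCredits.1 hb) ha0 hb0 hab

end ScoreVectors

theorem div_eq_div_of_div_succ_pow {K : Type*} [Field K] {x : K} (hx : x + 1 ≠ 0) {l m : ℕ}
    (hl : l ≤ m) :
    (x ^ l * (x + 1) ^ (m - l) + x ^ (m - l) * (x + 1) ^ l - 2 * x ^ m) / ((x + 1) ^ m - x ^ m) =
      ((x / (x + 1)) ^ l + (x / (x + 1)) ^ (m - l) - 2 * (x / (x + 1)) ^ m) /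
        (1 - (x / (x + 1)) ^ m) := by
  have hpow : (x + 1) ^ m = (x + 1) ^ l * (x + 1) ^ (m - l) := by
    rw [← pow_add, Nat.add_sub_cancel' hl]
  rw [← div_div_div_cancel_right₀ (pow_ne_zero m hx)]
  congr 1
  · rw [div_pow, div_pow, div_pow, div_eq_iff (pow_ne_zero _ hx), hpow]
    field_simp
  · rw [div_pow, sub_div, div_self (pow_ne_zero _ hx)]

theorem stmt11_general (m c l : ℕ) [NeZero m] (hm : 3 ≤ m)
    (hl : 1 ≤ l) (hlm : l ≤ m - 1) :
    {d : ZMod m → ℕ | ∃ σ : ZMod m → ZMod m → ℕ,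
        IsState (fun i j => if j = i + 1 ∨ i = j + 1 then c else 0) σ ∧ score σ = d ∧
        Feasible σ (0 : ZMod m) (l : ZMod m)}.ncard =
      c ^ l * (c + 1) ^ (m - l) + c ^ (m - l) * (c + 1) ^ l - 2 * c ^ m ∧
    (({d : ZMod m → ℕ | ∃ σ : ZMod m → ZMod m → ℕ,
        IsState (fun i j => if j = i + 1 ∨ i = j + 1 then c else 0) σ ∧ score σ = d ∧
        Feasible σ (0 : ZMod m) (l : ZMod m)}.ncard : ℝ) /
          (((c : ℝ) + 1) ^ m - (c : ℝ) ^ m) =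
        (((c : ℝ) / ((c : ℝ) + 1)) ^ l + ((c : ℝ) / ((c : ℝ) + 1)) ^ (m - l) -
            2 * ((c : ℝ) / ((c : ℝ) + 1)) ^ m) /
          (1 - ((c : ℝ) / ((c : ℝ) + 1)) ^ m)) := by
  have hcount := ncard_feasibleScores_cycleCap_add (c := c) hm hl (by omega : l < m)
  unfold feasibleScores cycleCap at hcount
  refine ⟨by omega, ?_⟩
  rw [← div_eq_div_of_div_succ_pow (by positivity) (by omega)]
  congr 1
  have hcount_real := congrArg (Nat.cast : ℕ → ℝ) hcount
  push_cast at hcount_real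
  linarith

/-- Success probability in cycle networks: the number of score vectors (equivalence
classes) of the cycle network on `m` vertices from which the unit transaction from `0` to
`l` is feasible is `c^l (c+1)^(m−l) + c^(m−l) (c+1)^l − 2 c^m`; consequently, with
`r = c/(c+1)`, the fraction of the `(c+1)^m − c^m` classes allowing the transaction is
`(r^l + r^(m−l) − 2r^m)/(1 − r^m)`. -/
theorem stmt11 (m c l : ℕ) [NeZero m] (hm : 3 ≤ m) (hc : 1 ≤ c)
    (hl : 1 ≤ l) (hlm : l ≤ m - 1) :
    {d : ZMod m → ℕ | ∃ σ : ZMod m → ZMod m → ℕ,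
        IsState (fun i j => if j = i + 1 ∨ i = j + 1 then c else 0) σ ∧ score σ = d ∧
        Feasible σ (0 : ZMod m) (l : ZMod m)}.ncard =
      c ^ l * (c + 1) ^ (m - l) + c ^ (m - l) * (c + 1) ^ l - 2 * c ^ m ∧
    (({d : ZMod m → ℕ | ∃ σ : ZMod m → ZMod m → ℕ,
        IsState (fun i j => if j = i + 1 ∨ i = j + 1 then c else 0) σ ∧ score σ = d ∧
        Feasible σ (0 : ZMod m) (l : ZMod m)}.ncard : ℝ) /
          (((c : ℝ) + 1) ^ m - (c : ℝ) ^ m) =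
        (((c : ℝ) / ((c : ℝ) + 1)) ^ l + ((c : ℝ) / ((c : ℝ) + 1)) ^ (m - l) -
            2 * ((c : ℝ) / ((c : ℝ) + 1)) ^ m) /
          (1 - ((c : ℝ) / ((c : ℝ) + 1)) ^ m)) :=
  stmt11_general m c l hm hl hlm
end
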